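/- Let n, D, T be positive integers, let Â be an n×n real matrix, and let g_1, …, g_T : (Fin D → ℝ) → (Fin D → ℝ) be everywhere differentiable maps. Given an input matrix X : Matrix (Fin n) (Fin D) ℝ, define recursively X^(0) = X and, for j = 1,…,T, X̃^(j) = Â * X^(j−1) and X^(j) i = g_j (X̃^(j) i) for each row i. Let F_j be the map X' ↦ (i ↦ g_j ((Â * X') i)) and let F = F_T ∘ F_{T−1} ∘ ⋯ ∘ F_1. Then F is differentiable at X and |det (fderiv ℝ F X)| = |det Â|^{T·D} · ∏_{j=1}^{T} ∏_{i : Fin n} |det (fderiv ℝ g_j (X̃^(j) i))|. -/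

import Mathlib

attribute [local instance] Matrix.normedAddCommGroup Matrix.normedSpace

/-- `iterFlow Ahat g j h X` is `(F_j ∘ F_{j-1} ∘ ⋯ ∘ F_1) X`, where the `k`-th constituent
flow `F_k` maps `X'` to the matrix whose `i`-th row is `g_k ((Ahat * X') i)`.  In particular
`iterFlow Ahat g 0 _ X = X` (so `X^(0) = X`) and
`iterFlow Ahat g (j+1) _ X = F_{j+1} (iterFlow Ahat g j _ X)`, i.e. `X^(j+1) i = g_{j+1} (X̃^(j+1) i)`
with `X̃^(j+1) = Ahat * X^(j)`. -/
def iterFlow {n D T : ℕ} (Ahat : Matrix (Fin n) (Fin n) ℝ)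
    (g : Fin T → (Fin D → ℝ) → (Fin D → ℝ)) :
    (j : ℕ) → j ≤ T → Matrix (Fin n) (Fin D) ℝ → Matrix (Fin n) (Fin D) ℝ
  | 0, _, X => X
  | j + 1, h, X => Matrix.of fun i => g ⟨j, h⟩ ((Ahat * iterFlow Ahat g j (Nat.le_of_succ_le h) X) i)

/-!
By the chain rule the Jacobian of the flow is the product of the Jacobians of its layers. The
layer `X ↦ (i ↦ g ((A * X) i))` is left multiplication by `A` followed by `g` applied row by row,
so its Jacobian is a block-diagonal map with blocks `Dg ((A * X) i)` composed with left
multiplication by `A`, which acts as `A` on each of the `D` columns and so has determinant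
`(det A) ^ D`. Multiplicativity of the determinant then gives the formula.
-/

open Matrix

theorem Matrix.det_mulLeftLinearMap {m κ R : Type*} [Fintype m] [DecidableEq m] [Fintype κ]
    [CommRing R] (A : Matrix m m R) :
    LinearMap.det (mulLeftLinearMap κ R A) = A.det ^ Fintype.card κ := by
  let e := (transposeLinearEquiv m κ R R).trans (ofLinearEquiv R).symm
  have hconj : e.toLinearMap ∘ₗ mulLeftLinearMap κ R A ∘ₗ e.symm.toLinearMap =
      LinearMap.pi fun k => toLin' A ∘ₗ LinearMap.proj k := by
    ext X k i
    simp [e, mul_apply, mulVec, dotProduct, mul_comm]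
  rw [← LinearMap.det_conj _ e, hconj, LinearMap.det_pi]
  simp

theorem hasFDerivAt_pi_map {𝕜 ι : Type*} [NontriviallyNormedField 𝕜] [Fintype ι]
    {E F : ι → Type*} [∀ i, NormedAddCommGroup (E i)] [∀ i, NormedSpace 𝕜 (E i)]
    [∀ i, NormedAddCommGroup (F i)] [∀ i, NormedSpace 𝕜 (F i)]
    {f : ∀ i, E i → F i} {f' : ∀ i, E i →L[𝕜] F i} {Y : ∀ i, E i}
    (hf : ∀ i, HasFDerivAt (f i) (f' i) (Y i)) :
    HasFDerivAt (Pi.map f) (ContinuousLinearMap.piMap f') Y :=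
  hasFDerivAt_pi.2 fun i => (hf i).comp Y (hasFDerivAt_apply i Y)

section Layer

variable {ι κ : Type*} [Fintype ι] [Fintype κ]

def gcLayer (A : Matrix ι ι ℝ) (g : (κ → ℝ) → κ → ℝ) (X : Matrix ι κ ℝ) : Matrix ι κ ℝ :=
  of fun i => g ((A * X) i)

noncomputable def gcLayerFDeriv (A : Matrix ι ι ℝ) (g : (κ → ℝ) → κ → ℝ) (X : Matrix ι κ ℝ) :
    Matrix ι κ ℝ →L[ℝ] Matrix ι κ ℝ :=
  (ContinuousLinearMap.piMap fun i => fderiv ℝ g ((A * X) i)).comp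
    (mulLeftLinearMap κ ℝ A).toContinuousLinearMap

theorem hasFDerivAt_gcLayer (A : Matrix ι ι ℝ) {g : (κ → ℝ) → κ → ℝ} {X : Matrix ι κ ℝ}
    (hg : ∀ i, DifferentiableAt ℝ g ((A * X) i)) :
    HasFDerivAt (gcLayer A g) (gcLayerFDeriv A g X) X :=
  (hasFDerivAt_pi_map (Y := A * X) fun i => (hg i).hasFDerivAt).comp X
    (mulLeftLinearMap κ ℝ A).toContinuousLinearMap.hasFDerivAt

theorem det_gcLayerFDeriv [DecidableEq ι] (A : Matrix ι ι ℝ) (g : (κ → ℝ) → κ → ℝ)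
    (X : Matrix ι κ ℝ) :
    LinearMap.det (gcLayerFDeriv A g X).toLinearMap =
      A.det ^ Fintype.card κ * ∏ i, LinearMap.det (fderiv ℝ g ((A * X) i)).toLinearMap :=
  -- the factors carry the `Pi` and the `Matrix` module structures, which agree only up to defeq
  calc LinearMap.det (gcLayerFDeriv A g X).toLinearMap
      = LinearMap.det (ContinuousLinearMap.piMap fun i => fderiv ℝ g ((A * X) i)).toLinearMap *
          LinearMap.det (mulLeftLinearMap κ ℝ A) := LinearMap.det_comp _ _
    _ = _ := by rw [det_mulLeftLinearMap, mul_comm]; exact congrArg _ (LinearMap.det_pi _)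

end Layer

variable {n D T : ℕ} (A : Matrix (Fin n) (Fin n) ℝ) (g : Fin T → (Fin D → ℝ) → (Fin D → ℝ))

theorem hasFDerivAt_iterFlow_succ {X : Matrix (Fin n) (Fin D) ℝ} {j : ℕ} (h : j + 1 ≤ T)
    (hg : Differentiable ℝ (g ⟨j, h⟩))
    (hX : DifferentiableAt ℝ (iterFlow A g j (Nat.le_of_succ_le h)) X) :
    HasFDerivAt (iterFlow A g (j + 1) h)
      ((gcLayerFDeriv A (g ⟨j, h⟩) (iterFlow A g j (Nat.le_of_succ_le h) X)).comp
        (fderiv ℝ (iterFlow A g j (Nat.le_of_succ_le h)) X)) X :=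
  (hasFDerivAt_gcLayer A fun _ => hg.differentiableAt).comp X hX.hasFDerivAt

theorem differentiableAt_iterFlow (hg : ∀ j, Differentiable ℝ (g j))
    (X : Matrix (Fin n) (Fin D) ℝ) :
    ∀ (j : ℕ) (h : j ≤ T), DifferentiableAt ℝ (iterFlow A g j h) X
  | 0, _ => differentiableAt_id
  | j + 1, h => (hasFDerivAt_iterFlow_succ A g h (hg _)
      (differentiableAt_iterFlow hg X j (Nat.le_of_succ_le h))).differentiableAt

theorem det_fderiv_iterFlow (hg : ∀ j, Differentiable ℝ (g j)) (X : Matrix (Fin n) (Fin D) ℝ) :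
    ∀ (j : ℕ) (h : j ≤ T), LinearMap.det (fderiv ℝ (iterFlow A g j h) X).toLinearMap =
        A.det ^ (j * D) * ∏ k : Fin j, ∏ i, LinearMap.det (fderiv ℝ (g (Fin.castLE h k))
          ((A * iterFlow A g k (k.is_lt.le.trans h) X) i)).toLinearMap
  | 0, _ => by simp [iterFlow]
  | j + 1, h => by
    rw [(hasFDerivAt_iterFlow_succ A g h (hg _) (differentiableAt_iterFlow A g hg X j _)).fderiv,
      ContinuousLinearMap.toLinearMap_comp, LinearMap.det_comp, det_gcLayerFDeriv,
      det_fderiv_iterFlow hg X j, Fin.prod_univ_castSucc, Fintype.card_fin]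
    simp only [Fin.castLE_castSucc, Fin.val_castSucc, Fin.val_last,
      show Fin.castLE h (Fin.last j) = ⟨j, h⟩ from rfl]
    ring

theorem gcflow_full_det_general (n D T : ℕ)
    (Ahat : Matrix (Fin n) (Fin n) ℝ)
    (g : Fin T → (Fin D → ℝ) → (Fin D → ℝ))
    (hg : ∀ j : Fin T, Differentiable ℝ (g j))
    (X : Matrix (Fin n) (Fin D) ℝ) :
    DifferentiableAt ℝ (iterFlow Ahat g T le_rfl) X ∧
      |LinearMap.det (fderiv ℝ (iterFlow Ahat g T le_rfl) X).toLinearMap| =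
        |Ahat.det| ^ (T * D) *
          ∏ j : Fin T, ∏ i : Fin n,
            |LinearMap.det
              (fderiv ℝ (g j)
                ((Ahat * iterFlow Ahat g j.val (Nat.le_of_lt j.isLt) X) i)).toLinearMap| := by
  refine ⟨differentiableAt_iterFlow Ahat g hg X T le_rfl, ?_⟩
  rw [det_fderiv_iterFlow Ahat g hg X T le_rfl]
  simp only [abs_mul, abs_pow, Finset.abs_prod, Fin.castLE_refl]

/-- For the composite flow `F = F_T ∘ F_{T-1} ∘ ⋯ ∘ F_1` with everywhere differentiable row maps
`g_1, …, g_T` and a common graph convolution matrix `Ahat`, `F` is differentiable at `X` and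
`|det (fderiv ℝ F X)| = |det Ahat|^(T·D) * ∏_{j=1}^T ∏_{i} |det (fderiv ℝ g_j (X̃^(j) i))|`,
where `X̃^(j) = Ahat * X^(j-1)`. -/
theorem gcflow_full_det (n D T : ℕ) (hn : 0 < n) (hD : 0 < D) (hT : 0 < T)
    (Ahat : Matrix (Fin n) (Fin n) ℝ)
    (g : Fin T → (Fin D → ℝ) → (Fin D → ℝ))
    (hg : ∀ j : Fin T, Differentiable ℝ (g j))
    (X : Matrix (Fin n) (Fin D) ℝ) :
    DifferentiableAt ℝ (iterFlow Ahat g T le_rfl) X ∧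
      |LinearMap.det (fderiv ℝ (iterFlow Ahat g T le_rfl) X).toLinearMap| =
        |Ahat.det| ^ (T * D) *
          ∏ j : Fin T, ∏ i : Fin n,
            |LinearMap.det
              (fderiv ℝ (g j)
                ((Ahat * iterFlow Ahat g j.val (Nat.le_of_lt j.isLt) X) i)).toLinearMap| :=
  gcflow_full_det_general n D T Ahat g hg X
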